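/- For all x, y ∈ (0, π/2] with x + y < π, and all β ∈ [3/2, 2]: cot(x+y) ≤ 1_{{x+y ≥ π/2}} · cot(x+y) + (cot(x) · cot(y))^β. Equivalently, whenever x, y ∈ (0, π/2] and x + y < π/2, one has cot(x+y) ≤ (cot(x) · cot(y))^β. -/

import Mathlib

open Real Set

/-
Both cotangents are nonnegative on `(0, π/2]`, so only the case `x + y < π/2` has content.
There `cot x > cot (π/2 - y) = tan y = (cot y)⁻¹`, so `cot x * cot y > 1`, and the power `β ≥ 1`
can only increase the product. Since `cot` decreases on `(0, π)`, `cot (x + y)` lies below both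
`cot x` and `cot y`; if it exceeds `1` then so do both factors and it lies below their product.
-/

namespace Real

theorem cot_eq_tan_pi_div_two_sub (x : ℝ) : cot x = tan (π / 2 - x) := by
  rw [tan_pi_div_two_sub, tan_inv_eq_cot]

theorem cot_nonneg {x : ℝ} (h0 : 0 ≤ x) (h : x ≤ π / 2) : 0 ≤ cot x := by
  rw [cot_eq_tan_pi_div_two_sub]
  exact tan_nonneg_of_nonneg_of_le_pi_div_two (by linarith) (by linarith)

theorem cot_pos {x : ℝ} (h0 : 0 < x) (h : x < π / 2) : 0 < cot x := by
  rw [cot_eq_tan_pi_div_two_sub]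
  exact tan_pos_of_pos_of_lt_pi_div_two (by linarith) (by linarith)

theorem strictAntiOn_cot : StrictAntiOn cot (Ioo 0 π) := by
  intro x ⟨hx0, hxπ⟩ y ⟨hy0, hyπ⟩ hxy
  simp only [cot_eq_tan_pi_div_two_sub]
  exact strictMonoOn_tan ⟨by linarith, by linarith⟩ ⟨by linarith, by linarith⟩ (by linarith)

theorem one_lt_cot_mul_cot {x y : ℝ} (hx : 0 < x) (hy : 0 < y) (h : x + y < π / 2) :
    1 < cot x * cot y := by
  have hcot_y : 0 < cot y := cot_pos hy (by linarith)
  have htan_y_pos : 0 < tan y := tan_pos_of_pos_of_lt_pi_div_two hy (by linarith)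
  have htan_y : tan y < cot x := by
    have := strictAntiOn_cot ⟨hx, by linarith⟩ ⟨by linarith, by linarith⟩
      (show x < π / 2 - y by linarith)
    rwa [cot_eq_tan_pi_div_two_sub (π / 2 - y), sub_sub_cancel] at this
  calc 1 = tan y * cot y := by rw [← tan_inv_eq_cot, mul_inv_cancel₀ htan_y_pos.ne']
    _ < cot x * cot y := mul_lt_mul_of_pos_right htan_y hcot_y

theorem cot_add_le_cot_mul_cot {x y : ℝ} (hx : 0 < x) (hy : 0 < y) (h : x + y < π / 2) :
    cot (x + y) ≤ cot x * cot y := by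
  have hlt_x : cot (x + y) < cot x :=
    strictAntiOn_cot ⟨hx, by linarith⟩ ⟨by linarith, by linarith⟩ (by linarith)
  have hlt_y : cot (x + y) < cot y :=
    strictAntiOn_cot ⟨hy, by linarith⟩ ⟨by linarith, by linarith⟩ (by linarith)
  have hprod := one_lt_cot_mul_cot hx hy h
  rcases le_or_gt (cot (x + y)) 1 with hle | hgt
  · linarith
  · calc cot (x + y) ≤ cot x := hlt_x.le
      _ ≤ cot x * cot y := le_mul_of_one_le_right (by linarith) (by linarith)

end Real

theorem cot_add_le_indicator_add_rpow :
    ∀ x ∈ Ioc (0 : ℝ) (π / 2), ∀ y ∈ Ioc (0 : ℝ) (π / 2), x + y < π →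
      ∀ β ∈ Icc (3 / 2 : ℝ) 2,
        Real.cot (x + y)
          ≤ (if π / 2 ≤ x + y then Real.cot (x + y) else 0)
            + (Real.cot x * Real.cot y) ^ β := by
  rintro x ⟨hx0, hx⟩ y ⟨hy0, hy⟩ - β ⟨hβ, -⟩
  split_ifs with h
  · have := rpow_nonneg (mul_nonneg (cot_nonneg hx0.le hx) (cot_nonneg hy0.le hy)) β
    linarith
  · have hacute : x + y < π / 2 := not_le.mp h
    calc cot (x + y) ≤ cot x * cot y := cot_add_le_cot_mul_cot hx0 hy0 hacute
      _ ≤ (cot x * cot y) ^ β :=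
        self_le_rpow_of_one_le (one_lt_cot_mul_cot hx0 hy0 hacute).le (by linarith)
      _ = 0 + (cot x * cot y) ^ β := (zero_add _).symm
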